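/- arXiv:2604.27991 — 2 statements merged into one kernel-verified Lean document; each statement's English description precedes it below -/
import Mathlib

section
/- Let (y_n)_{n≥0} be a Markov chain with transition matrix P and initial distribution δ_i for a state i ∈ I. Then the expected escape time from I, computed in the extended nonnegative reals, satisfies 𝔼[T] = ∑_{k=0}^∞ (Q^k 𝟙)_i (where both sides may equal +∞). -/
open MeasureTheory Matrix Finset ENNReal

/-!
`T > k` exactly when the chain stays in `I` at times `1, …, k`, so `𝔼[T] = ∑ₖ ℙ(T > k)`.
Splitting on the value of `y (n + 1)` and using the Markov property, the probability that a
path prefix ending at `a` is followed by `k` more steps inside `I` is the prefix probability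
times `h k a`, where `h 0 = 1` and `h (k + 1) a = ∑_{b ∈ I} P a b * h k b`. Restricted to `I`
this recursion is `h k = Q ^ k 𝟙`.
-/

theorem ENat.toENNReal_eq_tsum_indicator (n : ℕ∞) :
    (n : ℝ≥0∞) = ∑' k : ℕ, {m : ℕ∞ | (k : ℕ∞) < m}.indicator 1 n := by
  cases n with
  | top => simp
  | coe m =>
    rw [tsum_eq_sum (s := Finset.range m) fun k hk => by simpa using hk]
    simp +contextual [Set.indicator_apply, Finset.filter_true_of_mem]

theorem ENat.natCast_lt_sInf_iff {p : ℕ → Prop} {k : ℕ} :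
    (k : ℕ∞) < sInf {n : ℕ∞ | ∃ m : ℕ, n = m ∧ p m} ↔ ∀ m ≤ k, ¬ p m := by
  rw [← ENat.add_one_le_iff (ENat.natCast_ne_top k), le_sInf_iff]
  simp only [Set.mem_ofPred_eq, forall_exists_index, and_imp]
  rw [forall_comm]
  refine forall_congr' fun m => ?_
  simp only [forall_eq]
  norm_cast
  rw [imp_not_comm, not_le, Nat.add_one_le_iff]

theorem MeasureTheory.lintegral_enat_eq_tsum_measure_lt {Ω : Type*} [MeasurableSpace Ω]
    {μ : Measure Ω} {X : Ω → ℕ∞} (hX : ∀ k : ℕ, MeasurableSet {ω | (k : ℕ∞) < X ω}) :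
    ∫⁻ ω, (X ω : ℝ≥0∞) ∂μ = ∑' k : ℕ, μ {ω | (k : ℕ∞) < X ω} :=
  calc ∫⁻ ω, (X ω : ℝ≥0∞) ∂μ
      = ∫⁻ ω, ∑' k : ℕ, {ω | (k : ℕ∞) < X ω}.indicator 1 ω ∂μ :=
        lintegral_congr fun ω => ENat.toENNReal_eq_tsum_indicator (X ω)
    _ = ∑' k : ℕ, ∫⁻ ω, {ω | (k : ℕ∞) < X ω}.indicator 1 ω ∂μ :=
        lintegral_tsum fun k => (measurable_one.indicator (hX k)).aemeasurable
    _ = ∑' k : ℕ, μ {ω | (k : ℕ∞) < X ω} := tsum_congr fun k => lintegral_indicator_one (hX k)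

theorem MeasureTheory.measure_preimage_inter_eq_sum {Ω α : Type*} [MeasurableSpace Ω]
    [MeasurableSpace α] [MeasurableSingletonClass α] {f : Ω → α} (hf : Measurable f)
    (μ : Measure Ω) (I : Finset α) (s : Set Ω) :
    μ (f ⁻¹' I ∩ s) = ∑ b ∈ I, μ (f ⁻¹' {b} ∩ s) := by
  have h := sum_measure_preimage_singleton (μ := μ.restrict s) I
    fun b _ => hf (measurableSet_singleton b)
  rw [Measure.restrict_apply (hf I.measurableSet)] at h
  rw [← h]
  exact Finset.sum_congr rfl fun b _ => Measure.restrict_apply (hf (measurableSet_singleton b))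

/-- `survivalVec P I k a` is the probability of staying in `I` during `k` steps from `a`. -/
noncomputable def survivalVec {α : Type*} (P : Matrix α α ℝ) (I : Finset α) : ℕ → α → ℝ
  | 0 => 1
  | k + 1 => fun a => ∑ b ∈ I, P a b * survivalVec P I k b

theorem survivalVec_nonneg {α : Type*} {P : Matrix α α ℝ} (hP : ∀ a b, 0 ≤ P a b)
    (I : Finset α) (k : ℕ) (a : α) : 0 ≤ survivalVec P I k a := by
  induction k generalizing a with
  | zero => simp [survivalVec]
  | succ k ih => exact Finset.sum_nonneg fun b _ => mul_nonneg (hP a b) (ih b)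

theorem mulVec_pow_apply_eq_survivalVec {α : Type*} [DecidableEq α] {P : Matrix α α ℝ}
    {I : Finset α} {Q : Matrix I I ℝ} (hQ : ∀ a b : I, Q a b = P a b) (k : ℕ) (a : I) :
    (Q ^ k *ᵥ (fun _ => 1)) a = survivalVec P I k a := by
  induction k generalizing a with
  | zero => simp [survivalVec]
  | succ k ih =>
    calc (Q ^ (k + 1) *ᵥ fun _ => 1) a = ∑ b : I, Q a b * (Q ^ k *ᵥ fun _ => 1) b := by
          rw [pow_succ', ← mulVec_mulVec]; rfl
      _ = survivalVec P I (k + 1) a := by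
          simp only [hQ, ih, survivalVec]
          exact Finset.sum_coe_sort I fun b => P a b * survivalVec P I k b

section PathEvents

variable {Ω α : Type*} {y : ℕ → Ω → α}

def pathCylinder (y : ℕ → Ω → α) (n : ℕ) (w : ℕ → α) : Set Ω := {ω | ∀ k ≤ n, y k ω = w k}

def staysIn (y : ℕ → Ω → α) (I : Set α) (n k : ℕ) : Set Ω :=
  {ω | ∀ m, n < m → m ≤ n + k → y m ω ∈ I}

theorem pathCylinder_zero (a : α) : pathCylinder y 0 (fun _ => a) = y 0 ⁻¹' {a} := by
  ext ω; simp [pathCylinder]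

theorem pathCylinder_succ_update (n : ℕ) (w : ℕ → α) (b : α) :
    pathCylinder y (n + 1) (Function.update w (n + 1) b) =
      pathCylinder y n w ∩ y (n + 1) ⁻¹' {b} := by
  ext ω
  simp only [pathCylinder, Set.mem_inter_iff, Set.mem_ofPred_eq, Set.mem_preimage,
    Set.mem_singleton_iff, Nat.le_succ_iff, or_imp, forall_and, forall_eq, Nat.succ_eq_add_one,
    Function.update_self]
  exact and_congr_left' <| forall₂_congr fun m hm => by rw [Function.update_of_ne (by omega)]

theorem staysIn_zero (I : Set α) (n : ℕ) : staysIn y I n 0 = Set.univ := by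
  ext ω
  simp only [staysIn, Set.mem_ofPred_eq, Set.mem_univ, iff_true]
  intro m hm hm'
  omega

theorem staysIn_succ (I : Set α) (n k : ℕ) :
    staysIn y I n (k + 1) = y (n + 1) ⁻¹' I ∩ staysIn y I (n + 1) k := by
  ext ω
  simp only [staysIn, Set.mem_inter_iff, Set.mem_ofPred_eq, Set.mem_preimage]
  constructor
  · intro h
    exact ⟨h (n + 1) (by omega) (by omega), fun m hm hm' => h m (by omega) (by omega)⟩
  · rintro ⟨hsucc, h⟩ m hm hm'
    obtain rfl | hm := (show m = n + 1 ∨ n + 1 < m by omega)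
    exacts [hsucc, h m hm (by omega)]

variable [MeasurableSpace Ω] {μ : Measure Ω} {P : Matrix α α ℝ}

theorem measure_pathCylinder_inter_preimage_of_law {π₀ : α → ℝ} (hπ₀ : ∀ a, 0 ≤ π₀ a)
    (hP : ∀ a b, 0 ≤ P a b)
    (hlaw : ∀ n w, μ (pathCylinder y n w) =
      ENNReal.ofReal (π₀ (w 0) * ∏ k ∈ Finset.range n, P (w k) (w (k + 1))))
    (n : ℕ) (w : ℕ → α) (b : α) :
    μ (pathCylinder y n w ∩ y (n + 1) ⁻¹' {b}) =
      μ (pathCylinder y n w) * ENNReal.ofReal (P (w n) b) := by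
  rw [← pathCylinder_succ_update, hlaw, hlaw, ← ENNReal.ofReal_mul
    (mul_nonneg (hπ₀ _) (Finset.prod_nonneg fun k _ => hP _ _)), Finset.prod_range_succ,
    ← mul_assoc]
  congr 3
  · refine Finset.prod_congr rfl fun k hk => ?_
    rw [Finset.mem_range] at hk
    rw [Function.update_of_ne (by omega), Function.update_of_ne (by omega)]
  · exact Function.update_of_ne (by omega) _ _
  · exact Function.update_self _ _ _

variable [MeasurableSpace α] [MeasurableSingletonClass α]

theorem measurableSet_staysIn (hy : ∀ n, Measurable (y n)) (I : Finset α) (n k : ℕ) :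
    MeasurableSet (staysIn y I n k) := by
  unfold staysIn
  measurability

theorem measure_pathCylinder_inter_staysIn (hy : ∀ n, Measurable (y n))
    (hmarkov : ∀ n w b, μ (pathCylinder y n w ∩ y (n + 1) ⁻¹' {b}) =
      μ (pathCylinder y n w) * ENNReal.ofReal (P (w n) b))
    (hP : ∀ a b, 0 ≤ P a b) (I : Finset α) (k : ℕ) (n : ℕ) (w : ℕ → α) :
    μ (pathCylinder y n w ∩ staysIn y I n k) =
      μ (pathCylinder y n w) * ENNReal.ofReal (survivalVec P I k (w n)) := by
  induction k generalizing n w with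
  | zero => simp [staysIn_zero, survivalVec]
  | succ k ih =>
    calc μ (pathCylinder y n w ∩ staysIn y I n (k + 1))
        = ∑ b ∈ I, μ (pathCylinder y (n + 1) (Function.update w (n + 1) b) ∩
            staysIn y I (n + 1) k) := by
          rw [staysIn_succ, Set.inter_left_comm, measure_preimage_inter_eq_sum (hy _)]
          refine Finset.sum_congr rfl fun b _ => ?_
          rw [pathCylinder_succ_update, Set.inter_assoc, Set.inter_left_comm]
      _ = ∑ b ∈ I, μ (pathCylinder y n w) * ENNReal.ofReal (P (w n) b * survivalVec P I k b) := by
          refine Finset.sum_congr rfl fun b _ => ?_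
          rw [ih, pathCylinder_succ_update, hmarkov, Function.update_self, mul_assoc,
            ENNReal.ofReal_mul (hP _ _)]
      _ = μ (pathCylinder y n w) * ENNReal.ofReal (survivalVec P I (k + 1) (w n)) := by
          rw [← Finset.mul_sum, ← ENNReal.ofReal_sum_of_nonneg
            fun b _ => mul_nonneg (hP _ _) (survivalVec_nonneg hP I k b)]
          rfl

theorem measure_staysIn_of_law [Fintype α] (hy : ∀ n, Measurable (y n)) {π₀ : α → ℝ}
    (hπ₀ : ∀ a, 0 ≤ π₀ a) (hP : ∀ a b, 0 ≤ P a b)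
    (hlaw : ∀ n w, μ (pathCylinder y n w) =
      ENNReal.ofReal (π₀ (w 0) * ∏ k ∈ Finset.range n, P (w k) (w (k + 1))))
    (I : Finset α) (k : ℕ) :
    μ (staysIn y I 0 k) = ENNReal.ofReal (∑ a, π₀ a * survivalVec P I k a) := by
  calc μ (staysIn y I 0 k) = ∑ a, μ (pathCylinder y 0 (fun _ => a) ∩ staysIn y I 0 k) := by
        simp_rw [pathCylinder_zero, ← measure_preimage_inter_eq_sum (hy 0), Finset.coe_univ,
          Set.preimage_univ, Set.univ_inter]
    _ = ∑ a, ENNReal.ofReal (π₀ a * survivalVec P I k a) := by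
        refine Finset.sum_congr rfl fun a _ => ?_
        rw [measure_pathCylinder_inter_staysIn hy
          (measure_pathCylinder_inter_preimage_of_law hπ₀ hP hlaw) hP, hlaw]
        simp [ENNReal.ofReal_mul (hπ₀ a)]
    _ = ENNReal.ofReal (∑ a, π₀ a * survivalVec P I k a) :=
        (ENNReal.ofReal_sum_of_nonneg fun a _ =>
          mul_nonneg (hπ₀ a) (survivalVec_nonneg hP I k a)).symm

end PathEvents

theorem markov_expected_escape_time_eq_tsum_general
    (N : ℕ)
    (P : Matrix (Fin N) (Fin N) ℝ)
    (hPnonneg : ∀ a b, 0 ≤ P a b)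
    (I : Finset (Fin N))
    (Q : Matrix {x // x ∈ I} {x // x ∈ I} ℝ)
    (hQ : ∀ a b : {x // x ∈ I}, Q a b = P a b)
    (Ω : Type*) [MeasurableSpace Ω] (μ : Measure Ω)
    (y : ℕ → Ω → Fin N) (hy : ∀ n, Measurable (y n))
    (i : Fin N) (hi : i ∈ I)
    -- finite-dimensional laws of the chain, started in the Dirac distribution `δ_i`
    (hlaw : ∀ (n : ℕ) (w : ℕ → Fin N),
      μ {ω | ∀ k ≤ n, y k ω = w k} =
        ENNReal.ofReal ((if w 0 = i then (1 : ℝ) else 0) *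
          ∏ k ∈ Finset.range n, P (w k) (w (k + 1))))
    -- the escape time from `I`
    (T : Ω → ℕ∞)
    (hT : ∀ ω, T ω = sInf {n : ℕ∞ | ∃ m : ℕ, n = (m : ℕ∞) ∧ 1 ≤ m ∧ y m ω ∉ I}) :
    ∫⁻ ω, ((T ω : ℕ∞) : ℝ≥0∞) ∂μ =
      ∑' k : ℕ, ENNReal.ofReal ((Q ^ k *ᵥ (fun _ => 1)) ⟨i, hi⟩) := by
  have hescape (k : ℕ) : {ω | (k : ℕ∞) < T ω} = staysIn y I 0 k := by
    ext ω
    rw [Set.mem_ofPred_eq, hT, ENat.natCast_lt_sInf_iff]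
    simp only [staysIn, Set.mem_ofPred_eq, zero_add, not_and, not_not, Nat.one_le_iff_ne_zero,
      Nat.pos_iff_ne_zero, Finset.mem_coe]
    exact forall_congr' fun m => by tauto
  rw [lintegral_enat_eq_tsum_measure_lt fun k => hescape k ▸ measurableSet_staysIn hy I 0 k]
  refine tsum_congr fun k => ?_
  have hstart (a : Fin N) : 0 ≤ if a = i then (1 : ℝ) else 0 := by positivity
  rw [hescape, measure_staysIn_of_law hy hstart hPnonneg hlaw, mulVec_pow_apply_eq_survivalVec hQ]
  simp

/-- Let `(y n)` be a Markov chain on `{1,…,N}` with row-stochastic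
transition matrix `P` and initial distribution `δ_i` for a state `i ∈ I`.  Then the
expected escape time from `I`, computed in `[0,∞]`, satisfies
`𝔼[T] = ∑_{k=0}^∞ (Q^k 𝟙)_i` (where both sides may equal `+∞`). -/
theorem markov_expected_escape_time_eq_tsum
    (N : ℕ) (hN : 0 < N)
    (P : Matrix (Fin N) (Fin N) ℝ)
    (hPnonneg : ∀ a b, 0 ≤ P a b)
    (hProw : ∀ a, ∑ b, P a b = 1)
    (I : Finset (Fin N))
    (Q : Matrix {x // x ∈ I} {x // x ∈ I} ℝ)
    (hQ : ∀ a b : {x // x ∈ I}, Q a b = P a b)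
    (Ω : Type*) [MeasurableSpace Ω] (μ : Measure Ω) [IsProbabilityMeasure μ]
    (y : ℕ → Ω → Fin N) (hy : ∀ n, Measurable (y n))
    (i : Fin N) (hi : i ∈ I)
    -- finite-dimensional laws of the chain, started in the Dirac distribution `δ_i`
    (hlaw : ∀ (n : ℕ) (w : ℕ → Fin N),
      μ {ω | ∀ k ≤ n, y k ω = w k} =
        ENNReal.ofReal ((if w 0 = i then (1 : ℝ) else 0) *
          ∏ k ∈ Finset.range n, P (w k) (w (k + 1))))
    -- the escape time from `I`
    (T : Ω → ℕ∞)
    (hT : ∀ ω, T ω = sInf {n : ℕ∞ | ∃ m : ℕ, n = (m : ℕ∞) ∧ 1 ≤ m ∧ y m ω ∉ I}) :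
    ∫⁻ ω, ((T ω : ℕ∞) : ℝ≥0∞) ∂μ =
      ∑' k : ℕ, ENNReal.ofReal ((Q ^ k *ᵥ (fun _ => 1)) ⟨i, hi⟩) :=
  markov_expected_escape_time_eq_tsum_general N P hPnonneg I Q hQ Ω μ y hy i hi hlaw T hT
end

section
/- Let P ∈ ℝ^{N×N} be a row-stochastic matrix that is irreducible in the sense that there is no nonempty proper subset J ⊊ {1,…,N} which is invariant with probability one, i.e. no nonempty proper J with P_{ij} = 0 for all i ∈ J and j ∉ J. Let I ⊆ {1,…,N} be a nonempty proper subset and let Q = (P_{ij})_{i,j∈I} be the corresponding principal submatrix. Then the spectral radius of Q is strictly smaller than 1. -/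
open Matrix Finset

/-! If `Q v = z v` with `v ≠ 0` and `‖z‖ ≥ 1`, then `u = ‖v‖`, extended by zero outside `I`,
satisfies `u ≤ P u` on `I`. A row of `P` averages `u`, so at a maximum point of `u` this forces
every successor to be a maximum point too: the set of maximum points is invariant. It lies
inside `I` since the maximum is positive, so it is proper, contradicting irreducibility. -/

theorem Matrix.exists_mulVec_eq_smul_of_mem_spectrum {K n : Type*} [Field K] [Fintype n]
    [DecidableEq n] {A : Matrix n n K} {μ : K} (hμ : μ ∈ spectrum K A) :
    ∃ v ≠ 0, A *ᵥ v = μ • v := by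
  rw [← spectrum_toLin', ← Module.End.hasEigenvalue_iff_mem_spectrum] at hμ
  obtain ⟨v, hv⟩ := hμ.exists_hasEigenvector
  exact ⟨v, hv.2, by simpa using hv.apply_eq_smul⟩

theorem Matrix.norm_map_algebraMap_mulVec_le {n 𝕜 : Type*} [Fintype n] [SeminormedRing 𝕜]
    [NormedAlgebra ℝ 𝕜] {A : Matrix n n ℝ} (hA : ∀ i j, 0 ≤ A i j)
    (v : n → 𝕜) (i : n) :
    ‖(A.map (algebraMap ℝ 𝕜) *ᵥ v) i‖ ≤ ∑ j, A i j * ‖v j‖ := by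
  refine (norm_sum_le _ _).trans (sum_le_sum fun j _ => ?_)
  show ‖algebraMap ℝ 𝕜 (A i j) * v j‖ ≤ _
  rw [← Algebra.smul_def, norm_smul, Real.norm_of_nonneg (hA i j)]

theorem eq_of_le_sum_mul_of_forall_le {ι : Type*} {s : Finset ι} {p u : ι → ℝ} {M : ℝ}
    (hp : ∀ j ∈ s, 0 ≤ p j) (hsum : ∑ j ∈ s, p j = 1) (hu : ∀ j ∈ s, u j ≤ M)
    (hM : M ≤ ∑ j ∈ s, p j * u j) {j : ι} (hj : j ∈ s) (hpj : p j ≠ 0) : u j = M := by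
  have hterm : ∀ j ∈ s, 0 ≤ p j * (M - u j) := fun j hj =>
    mul_nonneg (hp j hj) (sub_nonneg.2 (hu j hj))
  have htotal : ∑ j ∈ s, p j * (M - u j) = 0 := by
    refine le_antisymm ?_ (sum_nonneg hterm)
    simp only [mul_sub, sum_sub_distrib, ← sum_mul, hsum, one_mul]
    linarith
  rcases mul_eq_zero.1 ((sum_eq_zero_iff_of_nonneg hterm).1 htotal j hj) with h | h
  · exact absurd h hpj
  · linarith

theorem Matrix.nonpos_of_le_mulVec_of_eq_zero_off {ι : Type*} [Fintype ι] {P : Matrix ι ι ℝ}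
    (hPnonneg : ∀ a b, 0 ≤ P a b) (hProw : ∀ a, ∑ b, P a b = 1)
    (hirr : ∀ J : Finset ι, J.Nonempty → J ≠ univ → ∃ a ∈ J, ∃ b, b ∉ J ∧ P a b ≠ 0)
    {I : Finset ι} (hI : I ≠ univ) {u : ι → ℝ} (hu : ∀ j ∉ I, u j = 0)
    (hsub : ∀ i ∈ I, u i ≤ (P *ᵥ u) i) (i : ι) : u i ≤ 0 := by
  classical
  obtain ⟨k, -, hk⟩ := univ.exists_max_image u ⟨i, mem_univ i⟩
  by_contra! hi
  let S := univ.filter (u · = u k)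
  have hSI : S ⊆ I := fun j hj => by
    by_contra hjI
    have : u j = u k := (mem_filter.1 hj).2
    linarith [hu j hjI, hk i (mem_univ i)]
  obtain ⟨a, haS, b, hbS, hab⟩ :=
    hirr S ⟨k, by simp [S]⟩ fun h => hI (univ_subset_iff.1 (h ▸ hSI))
  have ha : u a = u k := (mem_filter.1 haS).2
  have hb : u b = u k := eq_of_le_sum_mul_of_forall_le (fun j _ => hPnonneg a j) (hProw a)
    (fun j _ => hk j (mem_univ j)) (ha ▸ hsub a (hSI haS)) (mem_univ b) hab
  exact hbS (by simp [S, hb])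

theorem spectral_radius_principal_submatrix_lt_one_general
    (N : ℕ)
    (P : Matrix (Fin N) (Fin N) ℝ)
    (hPnonneg : ∀ a b, 0 ≤ P a b)
    (hProw : ∀ a, ∑ b, P a b = 1)
    -- irreducibility: no nonempty proper invariant subset
    (hirr : ∀ J : Finset (Fin N), J.Nonempty → J ≠ Finset.univ →
      ∃ a ∈ J, ∃ b, b ∉ J ∧ P a b ≠ 0)
    (I : Finset (Fin N)) (hIproper : I ≠ Finset.univ)
    (Q : Matrix {x // x ∈ I} {x // x ∈ I} ℝ)
    (hQ : ∀ a b : {x // x ∈ I}, Q a b = P a b) :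
    ∀ z : ℂ, z ∈ spectrum ℂ (Q.map (algebraMap ℝ ℂ)) → ‖z‖ < 1 := by
  classical
  intro z hz
  by_contra! hz1
  obtain ⟨v, hv0, hv⟩ := exists_mulVec_eq_smul_of_mem_spectrum hz
  let u : Fin N → ℝ := fun j => if h : j ∈ I then ‖v ⟨j, h⟩‖ else 0
  have hsub : ∀ i ∈ I, u i ≤ (P *ᵥ u) i := fun i hi => calc
    u i = ‖v ⟨i, hi⟩‖ := dif_pos hi
    _ ≤ ‖z‖ * ‖v ⟨i, hi⟩‖ := le_mul_of_one_le_left (norm_nonneg _) hz1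
    _ = ‖(Q.map (algebraMap ℝ ℂ) *ᵥ v) ⟨i, hi⟩‖ := by rw [hv, Pi.smul_apply, norm_smul]
    _ ≤ ∑ j, Q ⟨i, hi⟩ j * ‖v j‖ :=
      norm_map_algebraMap_mulVec_le (fun a b => hQ a b ▸ hPnonneg a b) v _
    _ = ∑ j : I, P i j * u j := by simp [u, hQ]
    _ = ∑ j ∈ I, P i j * u j := sum_coe_sort I fun j => P i j * u j
    _ = (P *ᵥ u) i := sum_subset (subset_univ I) fun j _ hj => by simp [u, hj]
  refine hv0 (funext fun j => norm_le_zero_iff.1 ?_)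
  simpa [u] using nonpos_of_le_mulVec_of_eq_zero_off hPnonneg hProw hirr hIproper
    (fun j hj => dif_neg hj) hsub j

/-- Let `P` be a row-stochastic `N × N` matrix that is irreducible in the
sense that no nonempty proper subset `J ⊊ {1,…,N}` is invariant with probability one
(i.e. there is no nonempty proper `J` with `P i j = 0` for all `i ∈ J`, `j ∉ J`).
Let `I` be a nonempty proper subset and `Q` the corresponding principal submatrix.
Then the spectral radius of `Q` (the maximum modulus of its complex eigenvalues) is
strictly smaller than 1. -/
theorem spectral_radius_principal_submatrix_lt_one
    (N : ℕ) (hN : 0 < N)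
    (P : Matrix (Fin N) (Fin N) ℝ)
    (hPnonneg : ∀ a b, 0 ≤ P a b)
    (hProw : ∀ a, ∑ b, P a b = 1)
    -- irreducibility: no nonempty proper invariant subset
    (hirr : ∀ J : Finset (Fin N), J.Nonempty → J ≠ Finset.univ →
      ∃ a ∈ J, ∃ b, b ∉ J ∧ P a b ≠ 0)
    (I : Finset (Fin N)) (hInonempty : I.Nonempty) (hIproper : I ≠ Finset.univ)
    (Q : Matrix {x // x ∈ I} {x // x ∈ I} ℝ)
    (hQ : ∀ a b : {x // x ∈ I}, Q a b = P a b) :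
    ∀ z : ℂ, z ∈ spectrum ℂ (Q.map (algebraMap ℝ ℂ)) → ‖z‖ < 1 :=
  spectral_radius_principal_submatrix_lt_one_general N P hPnonneg hProw hirr I hIproper Q hQ
end
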